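/- arXiv:2202.08321 — 5 statements merged into one kernel-verified Lean document; each statement's English description precedes it below -/
import Mathlib

section
/- There exists a constant c > 0 such that for all positive integers n and m, |λ_n − λ_m| ≥ c·|n − m|^{3/2}, where λ_n = −i·(n(g + n²)·tanh(hn))^{1/2} are the eigenvalues of the linearized water-wave operator. -/
/-!
Write `ω(x) = x (g + x²) tanh (h x)`, so that `|λ_n| = √ω(n)`. For `1 ≤ m ≤ n`,
`√ω(n) - √ω(m) = (ω(n) - ω(m)) / (√ω(n) + √ω(m))`. Since `tanh` is increasing, the numerator is
at least `tanh h · (n - m) n²`, while `ω(n) ≤ (g + 1) n³` bounds the denominator by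
`2 √(g + 1) n^{3/2}`. Hence the gap is at least `c (n - m) √n ≥ c (n - m)^{3/2}` with
`c = tanh h / (2 √(g + 1))`.
-/

open Real

namespace Real

theorem tanh_monotone : Monotone tanh := by
  intro a b hab
  rw [tanh_eq_sinh_div_cosh, tanh_eq_sinh_div_cosh, div_le_div_iff₀ (cosh_pos a) (cosh_pos b)]
  have : sinh (a - b) ≤ 0 := sinh_nonpos_iff.2 (sub_nonpos.2 hab)
  linarith [sinh_sub a b]

theorem tanh_pos {x : ℝ} (hx : 0 < x) : 0 < tanh x := by
  rw [tanh_eq_sinh_div_cosh]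
  exact div_pos (sinh_pos_iff.2 hx) (cosh_pos x)

theorem rpow_three_halves {x : ℝ} (hx : 0 ≤ x) : x ^ (3 / 2 : ℝ) = x * √x := by
  rw [show (3 / 2 : ℝ) = 1 + 1 / 2 by norm_num, rpow_add' hx (by norm_num), rpow_one,
    sqrt_eq_rpow]

theorem sub_le_two_mul_sqrt_mul_sub_sqrt {a b : ℝ} (hb : 0 ≤ b) (hba : b ≤ a) :
    a - b ≤ 2 * √a * (√a - √b) := by
  have hsq : √b ≤ √a := sqrt_le_sqrt hba
  nlinarith [sq_sqrt hb, sq_sqrt (hb.trans hba), sqrt_nonneg b]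

end Real

noncomputable def waterWaveFreqSq (g h x : ℝ) : ℝ := x * (g + x ^ 2) * tanh (h * x)

section
variable {g h : ℝ}

theorem waterWaveFreqSq_nonneg (hg : 0 ≤ g) (hh : 0 ≤ h) {x : ℝ} (hx : 0 ≤ x) :
    0 ≤ waterWaveFreqSq g h x :=
  mul_nonneg (by positivity) (tanh_zero ▸ tanh_monotone (by positivity))

theorem waterWaveFreqSq_le (hg : 0 ≤ g) {x : ℝ} (hx : 1 ≤ x) :
    waterWaveFreqSq g h x ≤ (g + 1) * x ^ 3 := by
  have hA : 0 ≤ x * (g + x ^ 2) := by positivity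
  calc waterWaveFreqSq g h x ≤ x * (g + x ^ 2) * 1 :=
        mul_le_mul_of_nonneg_left (tanh_lt_one _).le hA
    _ ≤ (g + 1) * x ^ 3 := by
      nlinarith [mul_nonneg hg (mul_nonneg (mul_nonneg (by linarith : (0:ℝ) ≤ x) (sub_nonneg.2 hx))
        (by linarith : (0:ℝ) ≤ x + 1))]

theorem mul_sub_mul_sq_le_waterWaveFreqSq_sub (hg : 0 ≤ g) (hh : 0 ≤ h) {m n : ℝ}
    (hm : 0 ≤ m) (hmn : m ≤ n) :
    tanh (h * m) * ((n - m) * n ^ 2) ≤ waterWaveFreqSq g h n - waterWaveFreqSq g h m := by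
  have hn : 0 ≤ n := hm.trans hmn
  have htm : 0 ≤ tanh (h * m) := tanh_zero ▸ tanh_monotone (by positivity)
  have htmn : tanh (h * m) ≤ tanh (h * n) := tanh_monotone (by nlinarith)
  have hA : (n - m) * n ^ 2 ≤ n * (g + n ^ 2) - m * (g + m ^ 2) := by
    nlinarith [mul_nonneg (mul_nonneg hm (sub_nonneg.2 hmn)) (add_nonneg hm hn),
      mul_nonneg hg (sub_nonneg.2 hmn)]
  unfold waterWaveFreqSq
  nlinarith [mul_le_mul_of_nonneg_left hA htm,
    mul_le_mul_of_nonneg_left htmn (by positivity : 0 ≤ n * (g + n ^ 2))]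

theorem sqrt_waterWaveFreqSq_le (hg : 0 ≤ g) {x : ℝ} (hx : 1 ≤ x) :
    √(waterWaveFreqSq g h x) ≤ √(g + 1) * (x * √x) := by
  calc √(waterWaveFreqSq g h x) ≤ √((g + 1) * x ^ 3) := sqrt_le_sqrt (waterWaveFreqSq_le hg hx)
    _ = √(g + 1) * (x * √x) := by
      rw [sqrt_mul (by linarith), pow_succ, sqrt_mul (by positivity), sqrt_sq (by linarith)]

theorem mul_rpow_three_halves_le_sqrt_waterWaveFreqSq_sub (hg : 0 ≤ g) (hh : 0 < h) {m n : ℝ}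
    (hm : 1 ≤ m) (hmn : m ≤ n) :
    tanh h / (2 * √(g + 1)) * (n - m) ^ (3 / 2 : ℝ) ≤
      √(waterWaveFreqSq g h n) - √(waterWaveFreqSq g h m) := by
  have hn : 1 ≤ n := hm.trans hmn
  have ht := tanh_pos hh
  have hth : tanh h ≤ tanh (h * m) := tanh_monotone (by nlinarith)
  have hgap : tanh h * ((n - m) * n ^ 2) ≤ waterWaveFreqSq g h n - waterWaveFreqSq g h m :=
    (mul_le_mul_of_nonneg_right hth (by nlinarith)).trans
      (mul_sub_mul_sq_le_waterWaveFreqSq_sub hg hh.le (by linarith) hmn)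
  have hωm := waterWaveFreqSq_nonneg hg hh.le (zero_le_one.trans hm)
  have hωmn : waterWaveFreqSq g h m ≤ waterWaveFreqSq g h n := by
    linarith [mul_nonneg ht.le (mul_nonneg (sub_nonneg.2 hmn) (sq_nonneg n))]
  set D := √(waterWaveFreqSq g h n) - √(waterWaveFreqSq g h m)
  have hD : 0 ≤ D := sub_nonneg.2 (sqrt_le_sqrt hωmn)
  have hS : 0 < 2 * (√(g + 1) * (n * √n)) := by positivity
  calc tanh h / (2 * √(g + 1)) * (n - m) ^ (3 / 2 : ℝ)
      ≤ tanh h / (2 * √(g + 1)) * ((n - m) * √n) := by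
        rw [rpow_three_halves (by linarith)]
        gcongr
        linarith
    _ = tanh h * ((n - m) * n ^ 2) / (2 * (√(g + 1) * (n * √n))) := by
        field_simp
        rw [sq_sqrt (by linarith)]
        ring
    _ ≤ 2 * √(waterWaveFreqSq g h n) * D / (2 * (√(g + 1) * (n * √n))) := by
        gcongr ?_ / _
        exact hgap.trans (sub_le_two_mul_sqrt_mul_sub_sqrt hωm hωmn)
    _ ≤ D := by
        rw [div_le_iff₀ hS]
        nlinarith [sqrt_waterWaveFreqSq_le (h := h) hg hn]

end

theorem Complex.norm_neg_I_mul_ofReal_sub (x y : ℝ) :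
    ‖-Complex.I * x - -Complex.I * y‖ = |x - y| := by
  rw [← mul_sub, norm_mul, ← Complex.ofReal_sub, Complex.norm_real]
  simp

/-- Eigenvalue gap bound: |λ_n − λ_m| ≥ c·|n − m|^{3/2} for the water-wave eigenvalues
λ_n = −i·(n(g + n²)·tanh(hn))^{1/2}. -/
theorem stmt0 (g h : ℝ) (hg : 0 < g) (hh : 0 < h)
    (lam : ℕ → ℂ)
    (hlam : ∀ n : ℕ, lam n =
      -Complex.I * Real.sqrt ((n : ℝ) * (g + (n : ℝ) ^ 2) * Real.tanh (h * n))) :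
    ∃ c : ℝ, 0 < c ∧ ∀ n m : ℕ, 0 < n → 0 < m →
      c * |(n : ℝ) - (m : ℝ)| ^ ((3 : ℝ) / 2) ≤ ‖lam n - lam m‖ := by
  refine ⟨tanh h / (2 * √(g + 1)), by have := tanh_pos hh; positivity, ?_⟩
  have hgap : ∀ n m : ℕ, 0 < m → m ≤ n →
      tanh h / (2 * √(g + 1)) * |(n : ℝ) - m| ^ ((3 : ℝ) / 2) ≤ ‖lam n - lam m‖ := by
    intro n m hm hmn
    have hmn' : (m : ℝ) ≤ n := by exact_mod_cast hmn
    rw [hlam, hlam, Complex.norm_neg_I_mul_ofReal_sub, abs_of_nonneg (sub_nonneg.2 hmn')]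
    exact (mul_rpow_three_halves_le_sqrt_waterWaveFreqSq_sub hg.le hh
      (by exact_mod_cast hm) hmn').trans (le_abs_self _)
  intro n m hn hm
  rcases le_total m n with hmn | hnm
  · exact hgap n m hm hmn
  · rw [abs_sub_comm, norm_sub_rev]
    exact hgap m n hn hnm
end

section
/- The series ∑_{p ∈ ℕ*} p^{−2ε} · ( ∑_{n ∈ ℕ*, n ≠ p} 1/|λ_n − λ_p| )² converges for every ε > 0, where λ_n = −i·(n(g + n²)·tanh(hn))^{1/2}. -/
/-!
Write `λₙ = -i ω(n)`. For `1 ≤ x ≤ y` one has `ω(y)² - ω(x)² ≥ tanh h · (y - x) y²` and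
`ω(x) + ω(y) ≤ 2 √(g + 1) y^{3/2}`, so `|ω(y) - ω(x)| ≳ |y - x| √(max x y)`. Bounding
`√(max n p) ≥ p^{1/2 - δ} |n - p|^δ` turns the inner sum into `p^{δ - 1/2} ∑_{k ≠ 0} |k|^{-(1 + δ)}`,
so the `p`-th term of the outer series is `O(p^{-(1 + 2(ε - δ))})`, summable once `δ < ε`.
-/

open Real

namespace Real

theorem tanh_strictMono : StrictMono tanh := fun x y hxy => by
  rwa [← artanh_lt_artanh_iff ⟨neg_one_lt_tanh x, tanh_lt_one x⟩
    ⟨neg_one_lt_tanh y, tanh_lt_one y⟩, artanh_tanh, artanh_tanh]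

theorem tanh_nonneg {x : ℝ} (hx : 0 ≤ x) : 0 ≤ tanh x := by
  simpa using tanh_strictMono.monotone hx

end Real

theorem rpow_mul_rpow_le_sqrt {x z M δ : ℝ} (hx : 0 ≤ x) (hz : 0 ≤ z) (hxM : x ≤ M) (hzM : z ≤ M)
    (hδ : 0 ≤ δ) (hδ' : δ ≤ 1 / 2) : x ^ (1 / 2 - δ) * z ^ δ ≤ √M := by
  have hM : 0 ≤ M := hx.trans hxM
  calc x ^ (1 / 2 - δ) * z ^ δ ≤ M ^ (1 / 2 - δ) * M ^ δ := by gcongr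
    _ = √M := by rw [← rpow_add' hM (by norm_num), sub_add_cancel, sqrt_eq_rpow]

theorem abs_sub_le_max_of_nonneg {x y : ℝ} (hx : 0 ≤ x) (hy : 0 ≤ y) : |y - x| ≤ max x y :=
  abs_sub_le_iff.2 ⟨by linarith [le_max_right x y], by linarith [le_max_left x y]⟩

/-- The capillary-gravity dispersion relation `ω(x)`, so that `λₙ = -i ω(n)`. -/
noncomputable def waterWaveFreq (g h x : ℝ) : ℝ := √(x * (g + x ^ 2) * tanh (h * x))

section WaterWaveFreq

variable {g h : ℝ}

theorem waterWaveFreq_sq (hg : 0 ≤ g) (hh : 0 ≤ h) {x : ℝ} (hx : 0 ≤ x) :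
    waterWaveFreq g h x ^ 2 = x * (g + x ^ 2) * tanh (h * x) :=
  sq_sqrt (by have := tanh_nonneg (mul_nonneg hh hx); positivity)

theorem waterWaveFreq_le (hg : 0 ≤ g) {x : ℝ} (hx : 1 ≤ x) :
    waterWaveFreq g h x ≤ √(g + 1) * (x * √x) := by
  have hx0 : 0 ≤ x := by linarith
  have harg : x * (g + x ^ 2) * tanh (h * x) ≤ (g + 1) * (x ^ 2 * x) := by
    nlinarith [mul_nonneg hg (mul_nonneg hx0 (by nlinarith : (0:ℝ) ≤ x ^ 2 - 1)),
      mul_le_mul_of_nonneg_left (tanh_lt_one (h * x)).le (by positivity : 0 ≤ x * (g + x ^ 2))]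
  calc waterWaveFreq g h x ≤ √((g + 1) * (x ^ 2 * x)) := sqrt_le_sqrt harg
    _ = √(g + 1) * (x * √x) := by rw [sqrt_mul (by linarith), sqrt_mul (by positivity), sqrt_sq hx0]

theorem sq_sub_sq_waterWaveFreq_ge (hg : 0 ≤ g) (hh : 0 ≤ h) {x y : ℝ} (hx : 1 ≤ x)
    (hxy : x ≤ y) :
    tanh h * (y - x) * y ^ 2 ≤ waterWaveFreq g h y ^ 2 - waterWaveFreq g h x ^ 2 := by
  rw [waterWaveFreq_sq hg hh (by linarith), waterWaveFreq_sq hg hh (by linarith)]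
  have hhx : tanh h ≤ tanh (h * x) := tanh_strictMono.monotone (by nlinarith)
  have hxy' : tanh (h * x) ≤ tanh (h * y) := tanh_strictMono.monotone (by nlinarith)
  have hpoly : (y - x) * y ^ 2 ≤ y * (g + y ^ 2) - x * (g + x ^ 2) := by
    nlinarith [mul_nonneg (sub_nonneg.2 hxy) (add_nonneg hg (by nlinarith : 0 ≤ x * y + x ^ 2))]
  have h0 : 0 ≤ tanh h := tanh_nonneg hh
  calc tanh h * (y - x) * y ^ 2 ≤ tanh (h * x) * (y * (g + y ^ 2) - x * (g + x ^ 2)) := by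
        rw [mul_assoc]
        gcongr
        exact h0.trans hhx
    _ ≤ _ := by
        have hy : 0 ≤ y := by linarith
        nlinarith [mul_le_mul_of_nonneg_left hxy' (by positivity : 0 ≤ y * (g + y ^ 2))]

theorem waterWaveFreq_sub_ge (hg : 0 ≤ g) (hh : 0 < h) {x y : ℝ} (hx : 1 ≤ x) (hxy : x ≤ y) :
    tanh h / (2 * √(g + 1)) * (y - x) * √y ≤ waterWaveFreq g h y - waterWaveFreq g h x := by
  have hy : 1 ≤ y := hx.trans hxy
  have hsq := sq_sub_sq_waterWaveFreq_ge hg hh.le hx hxy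
  have hFyle := waterWaveFreq_le (h := h) hg hy
  set Fx := waterWaveFreq g h x
  set Fy := waterWaveFreq g h y
  have hFx : 0 ≤ Fx := sqrt_nonneg _
  have hFy : 0 < Fy := sqrt_pos.2 (by have := tanh_pos (mul_pos hh (by linarith : 0 < y)); positivity)
  have hFxy : Fx ≤ Fy := (pow_le_pow_iff_left₀ hFx hFy.le two_ne_zero).1 (by
    have : 0 ≤ tanh h * (y - x) * y ^ 2 :=
      mul_nonneg (mul_nonneg (tanh_nonneg hh.le) (by linarith)) (sq_nonneg y)
    linarith)
  have hsum : Fy + Fx ≤ 2 * √(g + 1) * (y * √y) := by linarith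
  have hcoef : 0 ≤ tanh h / (2 * √(g + 1)) * (y - x) * √y := by
    have := tanh_nonneg hh.le
    exact mul_nonneg (mul_nonneg (by positivity) (by linarith)) (sqrt_nonneg _)
  refine le_of_mul_le_mul_right ?_ (by positivity : 0 < Fy + Fx)
  calc tanh h / (2 * √(g + 1)) * (y - x) * √y * (Fy + Fx)
      ≤ tanh h / (2 * √(g + 1)) * (y - x) * √y * (2 * √(g + 1) * (y * √y)) := by gcongr
    _ = tanh h * (y - x) * y ^ 2 := by
        field_simp
        rw [sq_sqrt (by linarith)]
        ring
    _ ≤ Fy ^ 2 - Fx ^ 2 := hsq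
    _ = (Fy - Fx) * (Fy + Fx) := by ring

theorem waterWaveFreq_abs_sub_ge (hg : 0 ≤ g) (hh : 0 < h) {x y : ℝ} (hx : 1 ≤ x) (hy : 1 ≤ y) :
    tanh h / (2 * √(g + 1)) * |y - x| * √(max x y) ≤
      |waterWaveFreq g h y - waterWaveFreq g h x| := by
  rcases le_total x y with hxy | hyx
  · rw [abs_of_nonneg (sub_nonneg.2 hxy), max_eq_right hxy]
    exact (waterWaveFreq_sub_ge hg hh hx hxy).trans (le_abs_self _)
  · rw [abs_sub_comm, abs_of_nonneg (sub_nonneg.2 hyx), max_eq_left hyx, abs_sub_comm]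
    exact (waterWaveFreq_sub_ge hg hh hy hyx).trans (le_abs_self _)

theorem exists_mul_rpow_mul_abs_sub_rpow_le (hg : 0 ≤ g) (hh : 0 < h) {δ : ℝ} (hδ : 0 ≤ δ)
    (hδ' : δ ≤ 1 / 2) :
    ∃ c > 0, ∀ x y : ℝ, 1 ≤ x → 1 ≤ y →
      c * x ^ (1 / 2 - δ) * |y - x| ^ (1 + δ) ≤ |waterWaveFreq g h y - waterWaveFreq g h x| := by
  refine ⟨tanh h / (2 * √(g + 1)), by have := tanh_pos hh; positivity, fun x y hx hy => ?_⟩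
  have hc : 0 ≤ tanh h / (2 * √(g + 1)) := by have := tanh_pos hh; positivity
  calc tanh h / (2 * √(g + 1)) * x ^ (1 / 2 - δ) * |y - x| ^ (1 + δ)
      = tanh h / (2 * √(g + 1)) * |y - x| * (x ^ (1 / 2 - δ) * |y - x| ^ δ) := by
        rw [rpow_add' (abs_nonneg _) (by linarith), rpow_one]
        ring
    _ ≤ tanh h / (2 * √(g + 1)) * |y - x| * √(max x y) := by
        gcongr
        exact rpow_mul_rpow_le_sqrt (by linarith) (abs_nonneg _) (le_max_left x y)
          (abs_sub_le_max_of_nonneg (by linarith) (by linarith)) hδ hδ'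
    _ ≤ _ := waterWaveFreq_abs_sub_ge hg hh hx hy

end WaterWaveFreq

theorem summable_and_tsum_abs_natCast_sub_rpow_le {b : ℝ} (hb : 1 < b) (p : ℤ) :
    Summable (fun n : ℕ => |(n : ℝ) - p| ^ (-b)) ∧
      ∑' n : ℕ, |(n : ℝ) - p| ^ (-b) ≤ ∑' k : ℤ, |(k : ℝ)| ^ (-b) := by
  have hinj : Function.Injective fun n : ℕ => (n : ℤ) - p := fun m n hmn => by simpa using hmn
  have hcomp : (fun n : ℕ => |(n : ℝ) - p| ^ (-b)) =
      (fun k : ℤ => |(k : ℝ)| ^ (-b)) ∘ fun n : ℕ => (n : ℤ) - p := by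
    ext n; simp
  rw [hcomp]
  exact ⟨(summable_abs_int_rpow hb).comp_injective hinj,
    tsum_comp_le_tsum_of_inj (summable_abs_int_rpow hb) (fun _ => by positivity) hinj⟩

theorem exists_tsum_inv_abs_sub_waterWaveFreq_le {g h : ℝ} (hg : 0 ≤ g) (hh : 0 < h) {δ : ℝ}
    (hδ : 0 < δ) (hδ' : δ ≤ 1 / 2) :
    ∃ C, ∀ p : ℕ, 1 ≤ p →
      ∑' n : ℕ, (if n = 0 ∨ n = p then 0 else 1 / |waterWaveFreq g h n - waterWaveFreq g h p|) ≤
        C * (p : ℝ) ^ (-(1 / 2 - δ)) := by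
  obtain ⟨c, hc, hgap⟩ := exists_mul_rpow_mul_abs_sub_rpow_le hg hh hδ.le hδ'
  refine ⟨(∑' k : ℤ, |(k : ℝ)| ^ (-(1 + δ))) / c, fun p hp => ?_⟩
  have hp' : (1 : ℝ) ≤ p := by exact_mod_cast hp
  obtain ⟨hsum, htsum⟩ := summable_and_tsum_abs_natCast_sub_rpow_le (by linarith : 1 < 1 + δ) p
  push_cast at hsum htsum
  have hterm : ∀ n : ℕ, (if n = 0 ∨ n = p then 0 else
      1 / |waterWaveFreq g h n - waterWaveFreq g h p|) ≤
        (c * (p : ℝ) ^ (1 / 2 - δ))⁻¹ * |(n : ℝ) - p| ^ (-(1 + δ)) := by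
    intro n
    split_ifs with hn
    · positivity
    obtain ⟨hn0, hnp⟩ := not_or.1 hn
    have hn' : (1 : ℝ) ≤ n := by exact_mod_cast Nat.one_le_iff_ne_zero.2 hn0
    have hnp : 0 < |(n : ℝ) - p| := abs_pos.2 (sub_ne_zero.2 (by exact_mod_cast hnp))
    rw [rpow_neg hnp.le, ← mul_inv, one_div]
    exact inv_anti₀ (by positivity) (hgap p n hp' hn')
  have hdom := hsum.mul_left (c * (p : ℝ) ^ (1 / 2 - δ))⁻¹
  calc _ ≤ ∑' n : ℕ, (c * (p : ℝ) ^ (1 / 2 - δ))⁻¹ * |(n : ℝ) - p| ^ (-(1 + δ)) :=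
        (hdom.of_nonneg_of_le (fun n => by split_ifs <;> positivity) hterm).tsum_le_tsum hterm hdom
    _ = (c * (p : ℝ) ^ (1 / 2 - δ))⁻¹ * ∑' n : ℕ, |(n : ℝ) - p| ^ (-(1 + δ)) := tsum_mul_left
    _ ≤ (c * (p : ℝ) ^ (1 / 2 - δ))⁻¹ * ∑' k : ℤ, |(k : ℝ)| ^ (-(1 + δ)) := by gcongr
    _ = _ := by rw [rpow_neg (by positivity)]; ring

/-- The series ∑_p p^{−2ε}·(∑_{n ≠ p} 1/|λ_n − λ_p|)² converges for every ε > 0. -/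
theorem stmt6 (g h : ℝ) (hg : 0 < g) (hh : 0 < h)
    (lam : ℕ → ℂ)
    (hlam : ∀ n : ℕ, lam n =
      -Complex.I * Real.sqrt ((n : ℝ) * (g + (n : ℝ) ^ 2) * Real.tanh (h * n)))
    (ε : ℝ) (hε : 0 < ε) :
    Summable (fun p : ℕ => if p = 0 then 0 else
      (p : ℝ) ^ (-(2 * ε)) *
        (∑' n : ℕ, if n = 0 ∨ n = p then 0 else 1 / ‖lam n - lam p‖) ^ 2) := by
  have hnorm : ∀ n p : ℕ, ‖lam n - lam p‖ = |waterWaveFreq g h n - waterWaveFreq g h p| := by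
    intro n p
    rw [hlam, hlam, ← mul_sub, norm_mul, norm_neg, Complex.norm_I, one_mul, ← Complex.ofReal_sub,
      Complex.norm_real, Real.norm_eq_abs, waterWaveFreq, waterWaveFreq]
  simp only [hnorm]
  obtain ⟨δ, hδ, hδε, hδ'⟩ : ∃ δ, 0 < δ ∧ δ < ε ∧ δ ≤ 1 / 2 :=
    ⟨min ε 1 / 2, by positivity, by linarith [min_le_left ε 1], by linarith [min_le_right ε 1]⟩
  obtain ⟨C, hC⟩ := exists_tsum_inv_abs_sub_waterWaveFreq_le hg.le hh hδ hδ'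
  refine (Real.summable_nat_rpow.2 (by linarith : -(1 + 2 * (ε - δ)) < -1)).mul_left (C ^ 2)
    |>.of_nonneg_of_le (fun p => by split_ifs <;> positivity) fun p => ?_
  split_ifs with hp0
  · positivity
  have hp : (0 : ℝ) < p := by exact_mod_cast Nat.pos_of_ne_zero hp0
  have hS := hC p (Nat.one_le_iff_ne_zero.2 hp0)
  have hS0 : 0 ≤ ∑' n : ℕ, (if n = 0 ∨ n = p then 0 else
      1 / |waterWaveFreq g h n - waterWaveFreq g h p|) :=
    tsum_nonneg fun n => by split_ifs <;> positivity
  calc _ ≤ (p : ℝ) ^ (-(2 * ε)) * (C * (p : ℝ) ^ (-(1 / 2 - δ))) ^ 2 := by gcongr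
    _ = C ^ 2 * (p : ℝ) ^ (-(1 + 2 * (ε - δ))) := by
        rw [mul_pow, ← rpow_mul_natCast hp.le, mul_left_comm, ← rpow_add hp]
        ring_nf
end

section
/- Let (μ_n)_{n ∈ ℕ*} be a sequence of distinct complex numbers, all with real part zero, and let λ > 0 be real. Suppose (d_n)_{n ∈ ℕ*} is a square-summable complex sequence, set r_n := 1/(μ_n + λ/2), and suppose ∑_{n} d_n · r_n^m = 0 for every integer m ≥ 1. If |μ_n| → ∞, then d_n = 0 for all n. -/
/-!
With `a n = d n * r n`, all power sums `∑ a n * r n ^ m`, `m ≥ 0`, vanish and `a` is absolutely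
summable. If `a ≠ 0`, pick `K` in the support of `a` with `‖r K‖` maximal (possible as `r n → 0`)
and set `w n = r n / r K`: on the support of `a` the `w n` lie in the closed unit disc and only
`w K` equals `1`. The Cesàro means over `m < M` of `w n ^ m` then tend to `1` at `n = K` and to `0`
elsewhere, so averaging the power sums and letting `M → ∞` (dominated convergence) gives `a K = 0`.
-/

open Filter Finset Topology

section CesaroMeanPow

variable {𝕜 : Type*} [RCLike 𝕜]

noncomputable def cesaroMeanPow (z : 𝕜) (M : ℕ) : 𝕜 :=
  (M : 𝕜)⁻¹ * ∑ m ∈ range M, z ^ m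

lemma norm_cesaroMeanPow_le_one {z : 𝕜} (hz : ‖z‖ ≤ 1) (M : ℕ) : ‖cesaroMeanPow z M‖ ≤ 1 := by
  have hsum : ‖∑ m ∈ range M, z ^ m‖ ≤ M :=
    calc ‖∑ m ∈ range M, z ^ m‖ ≤ ∑ m ∈ range M, ‖z‖ ^ m :=
          norm_sum_le_of_le _ fun m _ => (norm_pow z m).le
      _ ≤ ∑ _m ∈ range M, 1 := sum_le_sum fun m _ => pow_le_one₀ (norm_nonneg z) hz
      _ = M := by simp
  rw [cesaroMeanPow, norm_mul, norm_inv, RCLike.norm_natCast]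
  exact inv_mul_le_one_of_le₀ hsum (Nat.cast_nonneg M)

lemma tendsto_cesaroMeanPow_one : Tendsto (cesaroMeanPow (1 : 𝕜)) atTop (𝓝 1) := by
  refine tendsto_const_nhds.congr' (eventually_atTop.2 ⟨1, fun M hM => ?_⟩)
  have hM0 : (M : 𝕜) ≠ 0 := Nat.cast_ne_zero.2 (by omega)
  simp [cesaroMeanPow, inv_mul_cancel₀ hM0]

lemma tendsto_cesaroMeanPow_zero {z : 𝕜} (hz : ‖z‖ ≤ 1) (hz1 : z ≠ 1) :
    Tendsto (cesaroMeanPow z) atTop (𝓝 0) := by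
  have hbound : ∀ M : ℕ, ‖cesaroMeanPow z M‖ ≤ 2 / ‖z - 1‖ / M := by
    intro M
    have hnum : ‖z ^ M - 1‖ ≤ 2 :=
      calc ‖z ^ M - 1‖ ≤ ‖z‖ ^ M + ‖(1 : 𝕜)‖ := (norm_sub_le _ _).trans_eq (by rw [norm_pow])
        _ ≤ 1 + 1 := by gcongr; exacts [pow_le_one₀ (norm_nonneg z) hz, norm_one.le]
        _ = 2 := one_add_one_eq_two
    rw [cesaroMeanPow, geom_sum_eq hz1, norm_mul, norm_div, norm_inv, RCLike.norm_natCast,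
      inv_mul_eq_div]
    gcongr
  exact squeeze_zero_norm hbound (tendsto_const_div_atTop_nhds_zero_nat _)

lemma tendsto_cesaroMeanPow {z : 𝕜} (hz : ‖z‖ ≤ 1) :
    Tendsto (cesaroMeanPow z) atTop (𝓝 (if z = 1 then 1 else 0)) := by
  split_ifs with hz1
  · subst hz1
    exact tendsto_cesaroMeanPow_one
  · exact tendsto_cesaroMeanPow_zero hz hz1

end CesaroMeanPow

section PowerSums

variable {ι 𝕜 : Type*} [RCLike 𝕜]

lemma eq_zero_of_hasSum_mul_pow_eq_zero_of_unique_eq_one {a w : ι → 𝕜} {K : ι}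
    (hw : ∀ n, a n ≠ 0 → ‖w n‖ ≤ 1) (hwK : w K = 1) (hw1 : ∀ n, w n = 1 → n = K)
    (h : ∀ m : ℕ, HasSum (fun n => a n * w n ^ m) 0) : a K = 0 := by
  classical
  have ha : Summable fun n => ‖a n‖ := by simpa using (h 0).summable.norm
  have hmean : ∀ M, ∑' n, a n * cesaroMeanPow (w n) M = 0 := by
    intro M
    refine HasSum.tsum_eq ?_
    have := hasSum_sum fun m (_ : m ∈ range M) => (h m).mul_left (M : 𝕜)⁻¹
    simpa [cesaroMeanPow, mul_sum, mul_left_comm] using this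
  have hlim : ∀ n, Tendsto (fun M => a n * cesaroMeanPow (w n) M) atTop
      (𝓝 (if n = K then a n else 0)) := by
    intro n
    by_cases han : a n = 0
    · simp [han]
    have := (tendsto_cesaroMeanPow (hw n han)).const_mul (a n)
    have hiff : w n = 1 ↔ n = K := ⟨hw1 n, fun hn => hn ▸ hwK⟩
    simpa [hiff] using this
  have hdom : ∀ M n, ‖a n * cesaroMeanPow (w n) M‖ ≤ ‖a n‖ := by
    intro M n
    by_cases han : a n = 0
    · simp [han]
    rw [norm_mul]
    exact mul_le_of_le_one_right (norm_nonneg _) (norm_cesaroMeanPow_le_one (hw n han) M)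
  have := tendsto_tsum_of_dominated_convergence ha hlim (.of_forall hdom)
  simp only [hmean, tsum_ite_eq] at this
  exact tendsto_nhds_unique this tendsto_const_nhds

lemma exists_mem_forall_norm_le_of_tendsto_cofinite {E : Type*} [NormedAddCommGroup E]
    {r : ι → E} (hr_ne : ∀ n, r n ≠ 0) (hr : Tendsto r cofinite (𝓝 0)) {s : Set ι}
    (hs : s.Nonempty) : ∃ K ∈ s, ∀ n ∈ s, ‖r n‖ ≤ ‖r K‖ := by
  have hpos : ∀ n, 0 < ‖r n‖ := fun n => norm_pos_iff.2 (hr_ne n)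
  have hinv : Tendsto (fun n => ‖r n‖⁻¹) cofinite atTop :=
    tendsto_inv_nhdsGT_zero.comp <| tendsto_nhdsWithin_iff.2
      ⟨by simpa using hr.norm, .of_forall hpos⟩
  obtain ⟨K, hK, hmin⟩ := hinv.exists_within_forall_le hs
  exact ⟨K, hK, fun n hn => (inv_le_inv₀ (hpos K) (hpos n)).1 (hmin n hn)⟩

theorem eq_zero_of_forall_hasSum_mul_pow_eq_zero {a r : ι → 𝕜} (hr_inj : Function.Injective r)
    (hr_ne : ∀ n, r n ≠ 0) (hr : Tendsto r cofinite (𝓝 0))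
    (h : ∀ m : ℕ, HasSum (fun n => a n * r n ^ m) 0) : a = 0 := by
  by_contra ha
  obtain ⟨K, haK, hK⟩ := exists_mem_forall_norm_le_of_tendsto_cofinite hr_ne hr
    (Function.support_nonempty_iff.2 ha)
  refine haK (eq_zero_of_hasSum_mul_pow_eq_zero_of_unique_eq_one (w := fun n => r n / r K)
    (fun n han => ?_) (div_self (hr_ne K))
    (fun n hn => hr_inj ((div_eq_one_iff_eq (hr_ne K)).1 hn)) (fun m => ?_))
  · rw [norm_div]
    exact div_le_one_of_le₀ (hK n han) (norm_nonneg _)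
  · simpa [div_pow, mul_div_assoc] using (h m).div_const (r K ^ m)

end PowerSums

theorem stmt10_general (μ : ℕ → ℂ) (hinj : Function.Injective μ)
    (hre : ∀ n, (μ n).re = 0)
    (lam : ℝ) (hlam : 0 < lam)
    (htend : Filter.Tendsto (fun n => ‖μ n‖) Filter.atTop Filter.atTop)
    (d : ℕ → ℂ)
    (r : ℕ → ℂ) (hr : ∀ n, r n = (μ n + (lam : ℂ) / 2)⁻¹)
    (hsum : ∀ m : ℕ, 1 ≤ m → HasSum (fun n => d n * r n ^ m) 0) :
    ∀ n, d n = 0 := by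
  have hne : ∀ n, μ n + (lam : ℂ) / 2 ≠ 0 := fun n h => by
    have hre' := congrArg Complex.re h
    simp [hre n] at hre'
    linarith
  have hr_ne : ∀ n, r n ≠ 0 := fun n => hr n ▸ inv_ne_zero (hne n)
  have hr_inj : Function.Injective r := fun n m h =>
    hinj (add_right_cancel (inv_inj.1 (by rw [← hr, ← hr, h])))
  have hr_lim : Tendsto r cofinite (𝓝 0) := by
    rw [Nat.cofinite_eq_atTop, funext hr]
    exact tendsto_inv₀_cobounded.comp
      ((tendsto_add_const_cobounded _).comp (tendsto_norm_atTop_iff_cobounded.1 htend))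
  have hdr := eq_zero_of_forall_hasSum_mul_pow_eq_zero (a := fun n => d n * r n) hr_inj hr_ne
    hr_lim fun m => by simpa [pow_succ', mul_assoc] using hsum (m + 1) (by omega)
  exact fun n => (mul_eq_zero.1 (congrFun hdr n)).resolve_right (hr_ne n)

/-- Vanishing of all power sums ∑ d_n r_n^m, r_n = (μ_n + λ/2)^{-1}, forces d ≡ 0. -/
theorem stmt10 (μ : ℕ → ℂ) (hinj : Function.Injective μ)
    (hre : ∀ n, (μ n).re = 0)
    (lam : ℝ) (hlam : 0 < lam)
    (htend : Filter.Tendsto (fun n => ‖μ n‖) Filter.atTop Filter.atTop)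
    (d : ℕ → ℂ) (hd : Summable (fun n => ‖d n‖ ^ 2))
    (r : ℕ → ℂ) (hr : ∀ n, r n = (μ n + (lam : ℂ) / 2)⁻¹)
    (hsum : ∀ m : ℕ, 1 ≤ m → HasSum (fun n => d n * r n ^ m) 0) :
    ∀ n, d n = 0 :=
  stmt10_general μ hinj hre lam hlam htend d r hr hsum
end

section
/- In a Hilbert space H, let (φ_n)_{n ∈ ℕ*} be an orthonormal basis, let (ξ_n)_{n ∈ ℕ*} be a family such that ∑_n ‖ξ_n − φ_n‖² < ∞ (quadratically close). If (ξ_n) is ω-independent (no nontrivial ℓ² combination vanishes), then (ξ_n) is a Riesz basis of H. -/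
/-!
With `δ n = ξ n - φ n ∈ ℓ²(H)`, the operator `K x = ∑ ⟪φ n, x⟫ δ n` is compact: it is the norm
limit of the finite-rank operators obtained by truncating `δ`, since by Cauchy–Schwarz the
synthesis map `c ↦ ∑ c n • δ n` has norm at most `‖δ‖₂`. The operator `1 + K` sends `φ n` to
`ξ n` and `x` to `∑ ⟪φ n, x⟫ ξ n`, so ω-independence says exactly that `1 + K` is injective.
By the Fredholm alternative, `1 + K` is then invertible.
-/

open Filter
open scoped lp

theorem ENNReal.holderConjugate_toReal_two :
    (2 : ENNReal).toReal.HolderConjugate (2 : ENNReal).toReal := by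
  simpa using Real.HolderConjugate.two_two

namespace lp

variable {ι : Type*}

theorem summable_norm_sq {E : ι → Type*} [∀ i, NormedAddCommGroup (E i)] (f : lp E 2) :
    Summable fun i => ‖f i‖ ^ 2 := by
  simpa using (lp.hasSum_norm (p := 2) (by norm_num) f).summable

theorem memℓp_two_of_summable_norm_sq {E : ι → Type*} [∀ i, NormedAddCommGroup (E i)]
    {f : ∀ i, E i} (hf : Summable fun i => ‖f i‖ ^ 2) : Memℓp f 2 :=
  memℓp_gen (by simpa using hf)

theorem summable_and_tsum_norm_mul_norm_le {E F : ι → Type*} [∀ i, NormedAddCommGroup (E i)]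
    [∀ i, NormedAddCommGroup (F i)] {p q : ENNReal} (hpq : p.toReal.HolderConjugate q.toReal)
    (f : lp E p) (g : lp F q) :
    (Summable fun i => ‖f i‖ * ‖g i‖) ∧ ∑' i, ‖f i‖ * ‖g i‖ ≤ ‖f‖ * ‖g‖ := by
  simpa [norm_toNorm] using lp.tsum_mul_le_mul_norm hpq (toNorm f) (toNorm g)

section Synthesis

variable (𝕜 : Type*) {E : Type*} [NontriviallyNormedField 𝕜] [NormedAddCommGroup E]
  [NormedSpace 𝕜 E]

theorem summable_norm_smul (v : ℓ²(ι, E)) (c : ℓ²(ι, 𝕜)) :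
    Summable fun i => ‖c i • v i‖ := by
  simpa [norm_smul] using
    (summable_and_tsum_norm_mul_norm_le ENNReal.holderConjugate_toReal_two c v).1

theorem norm_tsum_smul_le (v : ℓ²(ι, E)) (c : ℓ²(ι, 𝕜)) :
    ‖∑' i, c i • v i‖ ≤ ‖c‖ * ‖v‖ :=
  calc ‖∑' i, c i • v i‖ ≤ ∑' i, ‖c i‖ * ‖v i‖ := by
        simpa [norm_smul] using norm_tsum_le_tsum_norm (summable_norm_smul 𝕜 v c)
    _ ≤ ‖c‖ * ‖v‖ := (summable_and_tsum_norm_mul_norm_le ENNReal.holderConjugate_toReal_two c v).2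

variable [CompleteSpace E]

noncomputable def synthesis : ℓ²(ι, E) →L[𝕜] ℓ²(ι, 𝕜) →L[𝕜] E :=
  LinearMap.mkContinuous₂
    (LinearMap.mk₂ 𝕜 (fun v c => ∑' i, c i • v i)
      (fun v w c => by
        simp only [coeFn_add, Pi.add_apply, smul_add]
        exact (summable_norm_smul 𝕜 v c).of_norm.tsum_add (summable_norm_smul 𝕜 w c).of_norm)
      (fun a v c => by
        simp only [coeFn_smul, Pi.smul_apply, smul_comm (c _) a]
        exact (summable_norm_smul 𝕜 v c).of_norm.tsum_const_smul a)
      (fun v c d => by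
        simp only [coeFn_add, Pi.add_apply, add_smul]
        exact (summable_norm_smul 𝕜 v c).of_norm.tsum_add (summable_norm_smul 𝕜 v d).of_norm)
      (fun a v c => by
        simp only [coeFn_smul, Pi.smul_apply, smul_assoc]
        exact (summable_norm_smul 𝕜 v c).of_norm.tsum_const_smul a))
    1 fun v c => (norm_tsum_smul_le 𝕜 v c).trans_eq (by ring)

variable {𝕜}

theorem hasSum_synthesis (v : ℓ²(ι, E)) (c : ℓ²(ι, 𝕜)) :
    HasSum (fun i => c i • v i) (synthesis 𝕜 v c) :=
  (summable_norm_smul 𝕜 v c).of_norm.hasSum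

theorem synthesis_single [DecidableEq ι] (i : ι) (e : E) :
    synthesis 𝕜 (lp.single 2 i e) =
      (ContinuousLinearMap.toSpanSingleton 𝕜 e).comp (evalCLM 𝕜 (fun _ => 𝕜) 2 i) := by
  ext c
  refine (hasSum_synthesis _ c).unique ?_
  have hsingle : ∀ j ≠ i, c j • (lp.single 2 i e : ℓ²(ι, E)) j = 0 := fun j hj => by simp [hj]
  convert hasSum_single i hsingle using 1
  simp [evalCLM]

theorem isCompactOperator_synthesis [ProperSpace 𝕜] (v : ℓ²(ι, E)) :
    IsCompactOperator (synthesis 𝕜 v) := by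
  classical
  have hsum := (lp.hasSum_single ENNReal.ofNat_ne_top v).mapL (synthesis 𝕜)
  refine isCompactOperator_of_tendsto hsum (Eventually.of_forall fun s => ?_)
  refine (compactOperator _ _ _).sum_mem fun i _ => ?_
  rw [synthesis_single]
  exact (isCompactOperator_of_locallyCompactSpace_dom (evalCLM 𝕜 (fun _ => 𝕜) 2 i)).clm_comp
    (ContinuousLinearMap.toSpanSingleton 𝕜 (v i))

end Synthesis

end lp

theorem IsCompactOperator.isUnit_one_add_of_injective {𝕜 X : Type*} [NontriviallyNormedField 𝕜]
    [NormedAddCommGroup X] [NormedSpace 𝕜 X] [CompleteSpace X] {K : X →L[𝕜] X}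
    (hK : IsCompactOperator K) (hinj : Function.Injective ⇑(1 + K)) : IsUnit (1 + K) := by
  have hK' : IsCompactOperator ⇑(-K) := hK.neg
  rcases hK'.hasEigenvalue_or_mem_resolventSet one_ne_zero with heig | hres
  · obtain ⟨x, hx, hx0⟩ := heig.exists_hasEigenvector
    refine absurd (hinj ?_) hx0
    have hKx : K x = -x := by
      simpa [neg_eq_iff_eq_neg] using Module.End.mem_eigenspace_iff.1 hx
    simp [hKx]
  · simpa [spectrum.mem_resolventSet_iff] using hres

theorem HilbertBasis.hasSum_repr_smul_add {ι 𝕜 H : Type*} [RCLike 𝕜] [NormedAddCommGroup H]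
    [InnerProductSpace 𝕜 H] [CompleteSpace H] (b : HilbertBasis ι 𝕜 H) (v : ℓ²(ι, H)) (x : H) :
    HasSum (fun i => b.repr x i • (b i + v i)) (x + lp.synthesis 𝕜 v (b.repr x)) := by
  simpa only [smul_add] using (b.hasSum_repr x).add (lp.hasSum_synthesis v (b.repr x))

/-- A family quadratically close to an orthonormal basis and ω-independent is a Riesz basis. -/
theorem stmt11 {H : Type*} [NormedAddCommGroup H] [InnerProductSpace ℂ H] [CompleteSpace H]
    (φ : HilbertBasis ℕ ℂ H) (ξ : ℕ → H)
    (hclose : Summable (fun n => ‖ξ n - φ n‖ ^ 2))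
    (hindep : ∀ c : ℕ → ℂ, Summable (fun n => ‖c n‖ ^ 2) →
      HasSum (fun n => c n • ξ n) 0 → ∀ n, c n = 0) :
    ∃ T : H ≃L[ℂ] H, ∀ n, T (φ n) = ξ n := by
  let δ : ℓ²(ℕ, H) := ⟨fun n => ξ n - φ n, lp.memℓp_two_of_summable_norm_sq hclose⟩
  let R : H →L[ℂ] ℓ²(ℕ, ℂ) := φ.repr.toContinuousLinearEquiv
  let K : H →L[ℂ] H := (lp.synthesis ℂ δ).comp R
  have hK : IsCompactOperator K := (lp.isCompactOperator_synthesis (𝕜 := ℂ) δ).comp_clm R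
  have hexpand : ∀ x, HasSum (fun n => φ.repr x n • ξ n) ((1 + K) x) := fun x => by
    simpa [δ, K, R] using φ.hasSum_repr_smul_add δ x
  have hinj : Function.Injective ⇑(1 + K) := by
    refine (injective_iff_map_eq_zero _).2 fun x hx => φ.repr.map_eq_zero_iff.1 (lp.ext ?_)
    exact funext (hindep _ (lp.summable_norm_sq _) (hx ▸ hexpand x))
  refine ⟨ContinuousLinearEquiv.unitsEquiv ℂ H (hK.isUnit_one_add_of_injective hinj).unit,
    fun n => (hexpand (φ n)).unique ?_⟩
  have hsingle : ∀ m ≠ n, φ.repr (φ n) m • ξ m = 0 := fun m hm => by simp [φ.repr_self, hm]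
  simpa [φ.repr_self] using hasSum_single n hsingle
end

section
/- Let α > 1 and let h : [1, ∞) → ℝ satisfy c·s^α ≤ |h(s)| ≤ C·s^α for all s ≥ 1 and |h(n₁) − h(n₂)| ≥ c'·|n₁ − n₂|·n₁^{α−1} for all positive integers n₁, n₂. Then for every real s < α − 1 there exists C'' > 0 such that for all integers p ≥ 2, ∑_{n ∈ ℕ*, n ≠ p} n^s/|h(n) − h(p)| ≤ C''·(p^{1−α+s}·log(p) + p^{−α}). -/
/-!
Applying the gap condition in both orders gives `|h n - h p| ≥ c' |n - p| max(n, p)^(α-1)`.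
Split the sum at `2n ≤ p`, `p < 2n ≤ 4p`, `2p < n`. For small `n` the denominator is `≳ p^α`,
so these terms contribute `p^(-α) ∑_{n ≤ p} n^s ≲ p^(1-α+s) log p + p^(-α)`. For `n` comparable
to `p` the terms are `≲ p^(1-α+s) / |n - p|`, a harmonic sum of size `log p`. For large `n` they
are `≲ n^(s-α)`, and since `s - α < -1` the tail beyond `p` is `≲ p^(1-α+s)` by comparison with
an integral.
-/

open Finset Real

lemma sum_Icc_inv_le_one_add_log (m : ℕ) : ∑ k ∈ Icc 1 m, (k : ℝ)⁻¹ ≤ 1 + log m := by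
  simpa [harmonic_eq_sum_Icc] using harmonic_le_one_add_log m

lemma sum_Icc_rpow_le_of_neg_one_le {s : ℝ} (hs : -1 ≤ s) (m : ℕ) :
    ∑ n ∈ Icc 1 m, (n : ℝ) ^ s ≤ (m : ℝ) ^ (s + 1) * (1 + log m) :=
  calc ∑ n ∈ Icc 1 m, (n : ℝ) ^ s = ∑ n ∈ Icc 1 m, (n : ℝ) ^ (s + 1) * (n : ℝ)⁻¹ := by
        refine sum_congr rfl fun n hn => ?_
        have hn : (n : ℝ) ≠ 0 := Nat.cast_ne_zero.2 (Nat.one_le_iff_ne_zero.1 (mem_Icc.1 hn).1)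
        rw [rpow_add_one hn, mul_inv_cancel_right₀ hn]
    _ ≤ ∑ n ∈ Icc 1 m, (m : ℝ) ^ (s + 1) * (n : ℝ)⁻¹ := by
        gcongr with n hn
        · linarith
        · exact (mem_Icc.1 hn).2
    _ ≤ (m : ℝ) ^ (s + 1) * (1 + log m) := by
        rw [← mul_sum]
        gcongr
        exact sum_Icc_inv_le_one_add_log m

lemma exists_sum_Icc_rpow_le (s : ℝ) : ∃ K, 0 ≤ K ∧ ∀ m : ℕ,
    ∑ n ∈ Icc 1 m, (n : ℝ) ^ s ≤ (m : ℝ) ^ (s + 1) * (1 + log m) + K := by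
  rcases le_or_gt (-1) s with hs | hs
  · exact ⟨0, le_rfl, fun m => by simpa using sum_Icc_rpow_le_of_neg_one_le hs m⟩
  · refine ⟨∑' n : ℕ, (n : ℝ) ^ s, tsum_nonneg fun n => by positivity, fun m => ?_⟩
    have hsum := (summable_nat_rpow.2 hs).sum_le_tsum (Icc 1 m) fun n _ => by positivity
    have : 0 ≤ (m : ℝ) ^ (s + 1) * (1 + log m) := by
      have := log_natCast_nonneg m
      positivity
    linarith

lemma sum_Ioc_rpow_le {r : ℝ} (hr : r < -1) {m : ℕ} (hm : 0 < m) (N : ℕ) :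
    ∑ n ∈ Ioc m N, (n : ℝ) ^ r ≤ (m : ℝ) ^ (r + 1) / -(r + 1) := by
  have hm' : (0 : ℝ) < m := by exact_mod_cast hm
  rcases le_or_gt m N with hmN | hNm
  · have hanti : AntitoneOn (fun x : ℝ => x ^ r) (Set.Icc (m : ℝ) N) :=
      fun x hx y _ hxy => rpow_le_rpow_of_nonpos (hm'.trans_le hx.1) hxy (by linarith)
    have hint := hanti.sum_le_integral_Ico hmN
    rw [integral_rpow (Or.inr ⟨hr.ne, fun h0 => ?_⟩)] at hint
    · rw [← Ico_add_one_add_one_eq_Ioc, ← sum_Ico_add']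
      refine hint.trans ?_
      rw [← neg_div_neg_eq, neg_sub]
      have : 0 ≤ (N : ℝ) ^ (r + 1) := by positivity
      exact div_le_div_of_nonneg_right (by linarith) (by linarith)
    · rw [Set.uIcc_of_le (by exact_mod_cast hmN)] at h0
      exact hm'.not_ge h0.1
  · rw [Ioc_eq_empty (by omega), sum_empty]
    have : 0 < -(r + 1) := by linarith
    positivity

lemma sum_comp_le_sum_of_injOn {ι κ : Type*} {s : Finset ι} {t : Finset κ} {e : ι → κ}
    (he : Set.InjOn e s) (hst : Set.MapsTo e s t) {g : κ → ℝ} (hg : ∀ k ∈ t, 0 ≤ g k) :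
    ∑ i ∈ s, g (e i) ≤ ∑ k ∈ t, g k := by
  classical
  rw [← sum_image he]
  exact sum_le_sum_of_subset_of_nonneg (image_subset_iff.2 hst) fun k hk _ => hg k hk

lemma sum_erase_inv_abs_sub_le (p : ℕ) :
    ∑ n ∈ (Icc 1 (2 * p)).erase p, |(n : ℝ) - p|⁻¹ ≤ 2 * (1 + log p) := by
  have hdist : ∀ n : ℕ, |(n : ℝ) - p| = (((n : ℤ) - p).natAbs : ℝ) := fun n => by
    rw [Nat.cast_natAbs]; push_cast; rfl
  have hharm : ∀ S : Finset ℕ, Set.InjOn (fun n : ℕ => ((n : ℤ) - p).natAbs) S →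
      Set.MapsTo (fun n : ℕ => ((n : ℤ) - p).natAbs) S (Icc 1 p) →
      ∑ n ∈ S, (((n : ℤ) - p).natAbs : ℝ)⁻¹ ≤ 1 + log p := fun S hinj hmaps =>
    (sum_comp_le_sum_of_injOn hinj hmaps fun k _ => inv_nonneg.2 k.cast_nonneg).trans
      (sum_Icc_inv_le_one_add_log p)
  simp_rw [hdist]
  rw [← sum_filter_add_sum_filter_not _ (· < p), two_mul (1 + log (p : ℝ))]
  refine add_le_add (hharm _ ?inj ?maps) (hharm _ ?inj' ?maps')
  case inj | inj' =>
    intro n hn m hm h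
    simp only [not_lt, coe_filter, mem_erase, mem_Icc, Set.mem_ofPred_eq] at hn hm h
    omega
  case maps | maps' =>
    intro n hn
    simp only [not_lt, coe_filter, mem_erase, mem_Icc, Set.mem_ofPred_eq, coe_Icc,
      Set.mem_Icc] at hn ⊢
    omega

lemma sum_ite_le_sum_of_subset {ι : Type*} {s t : Finset ι} {P : ι → Prop} [DecidablePred P]
    {f : ι → ℝ} (hst : ∀ i ∈ s, P i → i ∈ t) (hf : ∀ i ∈ t, 0 ≤ f i) :
    ∑ i ∈ s, (if P i then f i else 0) ≤ ∑ i ∈ t, f i := by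
  rw [← sum_filter]
  exact sum_le_sum_of_subset_of_nonneg (fun i hi => hst i (mem_filter.1 hi).1 (mem_filter.1 hi).2)
    fun i hi _ => hf i hi

lemma one_add_log_le_mul_log {x : ℝ} (hx : 2 ≤ x) : 1 + log x ≤ (1 + (log 2)⁻¹) * log x := by
  have h2 : 0 < log 2 := log_pos one_lt_two
  have hx2 : log 2 ≤ log x := log_le_log two_pos hx
  have : 1 ≤ (log 2)⁻¹ * log x := by rw [inv_mul_eq_div, le_div_iff₀ h2]; linarith
  linarith

def HasSpectralGap (h : ℝ → ℝ) (α c' : ℝ) : Prop :=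
  ∀ n₁ n₂ : ℕ, 0 < n₁ → 0 < n₂ → c' * |(n₁ : ℝ) - n₂| * (n₁ : ℝ) ^ (α - 1) ≤ |h n₁ - h n₂|

namespace HasSpectralGap

variable {h : ℝ → ℝ} {α c' s : ℝ} {n p : ℕ}

lemma rpow_div_le_left (hg : HasSpectralGap h α c') (hc' : 0 < c') (hn : 0 < n) (hp : 0 < p)
    (hnp : n ≠ p) : (n : ℝ) ^ s / |h n - h p| ≤ (n : ℝ) ^ (1 - α + s) / (c' * |(n : ℝ) - p|) := by
  have hn' : (0 : ℝ) < n := by exact_mod_cast hn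
  have hd : 0 < |(n : ℝ) - p| := abs_pos.2 (sub_ne_zero.2 (by exact_mod_cast hnp))
  calc (n : ℝ) ^ s / |h n - h p| ≤ (n : ℝ) ^ s / (c' * |(n : ℝ) - p| * (n : ℝ) ^ (α - 1)) :=
        div_le_div_of_nonneg_left (by positivity) (by positivity) (hg n p hn hp)
    _ = (n : ℝ) ^ (1 - α + s) / (c' * |(n : ℝ) - p|) := by
        rw [show 1 - α + s = s - (α - 1) by ring, rpow_sub hn' s]
        ring

lemma rpow_div_le_right (hg : HasSpectralGap h α c') (hc' : 0 < c') (hn : 0 < n) (hp : 0 < p)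
    (hnp : n ≠ p) :
    (n : ℝ) ^ s / |h n - h p| ≤ (n : ℝ) ^ s * (p : ℝ) ^ (1 - α) / (c' * |(n : ℝ) - p|) := by
  have hp' : (0 : ℝ) < p := by exact_mod_cast hp
  have hd : 0 < |(n : ℝ) - p| := abs_pos.2 (sub_ne_zero.2 (by exact_mod_cast hnp))
  calc (n : ℝ) ^ s / |h n - h p| ≤ (n : ℝ) ^ s / (c' * |(n : ℝ) - p| * (p : ℝ) ^ (α - 1)) := by
        refine div_le_div_of_nonneg_left (by positivity) (by positivity) ?_
        simpa only [abs_sub_comm] using hg p n hp hn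
    _ = (n : ℝ) ^ s * (p : ℝ) ^ (1 - α) / (c' * |(n : ℝ) - p|) := by
        rw [show 1 - α = -(α - 1) by ring, rpow_neg hp'.le]
        field_simp

lemma rpow_div_le_of_two_mul_le (hg : HasSpectralGap h α c') (hc' : 0 < c') (hn : 0 < n)
    (hnp : 2 * n ≤ p) : (n : ℝ) ^ s / |h n - h p| ≤ 2 / c' * (p : ℝ) ^ (-α) * (n : ℝ) ^ s := by
  have hp : 0 < p := by omega
  have hp' : (0 : ℝ) < p := by exact_mod_cast hp
  have hnp' : 2 * (n : ℝ) ≤ p := by exact_mod_cast hnp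
  have hd : (p : ℝ) / 2 ≤ |(n : ℝ) - p| := by rw [abs_sub_comm, abs_of_pos (by linarith)]; linarith
  calc (n : ℝ) ^ s / |h n - h p| ≤ (n : ℝ) ^ s * (p : ℝ) ^ (1 - α) / (c' * |(n : ℝ) - p|) :=
        hg.rpow_div_le_right hc' hn hp (by omega : n ≠ p)
    _ ≤ (n : ℝ) ^ s * (p : ℝ) ^ (1 - α) / (c' * ((p : ℝ) / 2)) := by gcongr
    _ = 2 / c' * (p : ℝ) ^ (-α) * (n : ℝ) ^ s := by
        rw [sub_eq_add_neg, rpow_add hp', rpow_one]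
        field_simp

lemma rpow_div_le_of_lt_two_mul (hg : HasSpectralGap h α c') (hc' : 0 < c') (hs : s < α - 1)
    (hn : 0 < n) (hp : 0 < p) (hnp : n ≠ p) (hpn : p < 2 * n) :
    (n : ℝ) ^ s / |h n - h p| ≤
      2 ^ (α - 1 - s) / c' * (p : ℝ) ^ (1 - α + s) * |(n : ℝ) - p|⁻¹ := by
  have hp' : (0 : ℝ) < p := by exact_mod_cast hp
  have hpn' : (p : ℝ) / 2 ≤ n := by
    have : (p : ℝ) < 2 * n := by exact_mod_cast hpn
    linarith
  have hd : 0 < |(n : ℝ) - p| := abs_pos.2 (sub_ne_zero.2 (by exact_mod_cast hnp))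
  calc (n : ℝ) ^ s / |h n - h p| ≤ (n : ℝ) ^ (1 - α + s) / (c' * |(n : ℝ) - p|) :=
        hg.rpow_div_le_left hc' hn hp hnp
    _ ≤ ((p : ℝ) / 2) ^ (1 - α + s) / (c' * |(n : ℝ) - p|) := by
        have := rpow_le_rpow_of_nonpos (z := 1 - α + s) (by positivity) hpn' (by linarith)
        gcongr
    _ = 2 ^ (α - 1 - s) / c' * (p : ℝ) ^ (1 - α + s) * |(n : ℝ) - p|⁻¹ := by
        rw [div_rpow hp'.le zero_le_two, show α - 1 - s = -(1 - α + s) by ring,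
          rpow_neg zero_le_two]
        field_simp

lemma rpow_div_le_of_two_mul_lt (hg : HasSpectralGap h α c') (hc' : 0 < c') (hp : 0 < p)
    (hpn : 2 * p < n) : (n : ℝ) ^ s / |h n - h p| ≤ 2 / c' * (n : ℝ) ^ (s - α) := by
  have hn : 0 < n := by omega
  have hn' : (0 : ℝ) < n := by exact_mod_cast hn
  have hpn' : 2 * (p : ℝ) < n := by exact_mod_cast hpn
  have hd : (n : ℝ) / 2 ≤ |(n : ℝ) - p| := by rw [abs_of_pos (by linarith)]; linarith
  calc (n : ℝ) ^ s / |h n - h p| ≤ (n : ℝ) ^ (1 - α + s) / (c' * |(n : ℝ) - p|) :=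
        hg.rpow_div_le_left hc' hn hp (by omega)
    _ ≤ (n : ℝ) ^ (1 - α + s) / (c' * ((n : ℝ) / 2)) := by gcongr
    _ = 2 / c' * (n : ℝ) ^ (s - α) := by
        rw [show 1 - α + s = (s - α) + 1 by ring, rpow_add_one hn'.ne']
        field_simp

lemma rpow_div_le_majorant (hg : HasSpectralGap h α c') (hc' : 0 < c') (hs : s < α - 1)
    (hp : 0 < p) (n : ℕ) :
    (if n = 0 ∨ n = p then 0 else (n : ℝ) ^ s / |h n - h p|) ≤
      (if n ∈ Icc 1 p then 2 / c' * (p : ℝ) ^ (-α) * (n : ℝ) ^ s else 0)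
      + (if n ∈ (Icc 1 (2 * p)).erase p then
          2 ^ (α - 1 - s) / c' * (p : ℝ) ^ (1 - α + s) * |(n : ℝ) - p|⁻¹ else 0)
      + (if p < n then 2 / c' * (n : ℝ) ^ (s - α) else 0) := by
  by_cases h0 : n = 0 ∨ n = p
  · rw [if_pos h0]
    positivity
  rw [if_neg h0]
  obtain ⟨hn, hnp⟩ : 0 < n ∧ n ≠ p := by omega
  rcases le_or_gt (2 * n) p with hsmall | hpn
  · rw [if_pos (mem_Icc.2 ⟨hn, by omega⟩)]
    refine le_add_of_le_of_nonneg (le_add_of_le_of_nonneg ?_ (by positivity)) (by positivity)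
    exact hg.rpow_div_le_of_two_mul_le hc' hn hsmall
  rcases le_or_gt n (2 * p) with hnear | hlarge
  · rw [if_pos (mem_erase.2 ⟨hnp, mem_Icc.2 ⟨hn, hnear⟩⟩)]
    refine le_add_of_le_of_nonneg (le_add_of_nonneg_of_le (by positivity) ?_) (by positivity)
    exact hg.rpow_div_le_of_lt_two_mul hc' hs hn hp hnp hpn
  · rw [if_pos (by omega : p < n)]
    refine le_add_of_nonneg_of_le (by positivity) ?_
    exact hg.rpow_div_le_of_two_mul_lt hc' hp hlarge

lemma sum_range_rpow_div_le (hg : HasSpectralGap h α c') (hc' : 0 < c') (hs : s < α - 1) {K : ℝ}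
    (hK : ∀ m : ℕ, ∑ n ∈ Icc 1 m, (n : ℝ) ^ s ≤ (m : ℝ) ^ (s + 1) * (1 + log m) + K)
    (hp : 0 < p) (N : ℕ) :
    ∑ n ∈ range N, (if n = 0 ∨ n = p then 0 else (n : ℝ) ^ s / |h n - h p|) ≤
      (2 + 2 * 2 ^ (α - 1 - s) + 2 / (α - 1 - s)) / c' * ((p : ℝ) ^ (1 - α + s) * (1 + log p))
        + 2 * K / c' * (p : ℝ) ^ (-α) := by
  have hp' : (0 : ℝ) < p := by exact_mod_cast hp
  calc _ ≤ ∑ n ∈ range N, ((if n ∈ Icc 1 p then 2 / c' * (p : ℝ) ^ (-α) * (n : ℝ) ^ s else 0)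
        + (if n ∈ (Icc 1 (2 * p)).erase p then
            2 ^ (α - 1 - s) / c' * (p : ℝ) ^ (1 - α + s) * |(n : ℝ) - p|⁻¹ else 0)
        + (if p < n then 2 / c' * (n : ℝ) ^ (s - α) else 0)) :=
        sum_le_sum fun n _ => hg.rpow_div_le_majorant hc' hs hp n
    _ ≤ ∑ n ∈ Icc 1 p, 2 / c' * (p : ℝ) ^ (-α) * (n : ℝ) ^ s
        + ∑ n ∈ (Icc 1 (2 * p)).erase p,
            2 ^ (α - 1 - s) / c' * (p : ℝ) ^ (1 - α + s) * |(n : ℝ) - p|⁻¹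
        + ∑ n ∈ Ioc p N, 2 / c' * (n : ℝ) ^ (s - α) := by
        rw [sum_add_distrib, sum_add_distrib]
        gcongr ?_ + ?_ + ?_ <;> refine sum_ite_le_sum_of_subset ?_ fun n _ => by positivity
        · exact fun n _ hn => hn
        · exact fun n _ hn => hn
        · exact fun n hn hpn => mem_Ioc.2 ⟨hpn, (mem_range.1 hn).le⟩
    _ ≤ 2 / c' * (p : ℝ) ^ (-α) * ((p : ℝ) ^ (s + 1) * (1 + log p) + K)
        + 2 ^ (α - 1 - s) / c' * (p : ℝ) ^ (1 - α + s) * (2 * (1 + log p))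
        + 2 / c' * ((p : ℝ) ^ (s - α + 1) / -(s - α + 1)) := by
        simp only [← mul_sum]
        gcongr
        · exact hK p
        · exact sum_erase_inv_abs_sub_le p
        · exact sum_Ioc_rpow_le (by linarith) hp N
    _ = (2 + 2 * 2 ^ (α - 1 - s) + 2 / (α - 1 - s)) / c' * ((p : ℝ) ^ (1 - α + s) * (1 + log p))
          + 2 * K / c' * (p : ℝ) ^ (-α)
          - 2 / c' / (α - 1 - s) * ((p : ℝ) ^ (1 - α + s) * log p) := by
        rw [show s + 1 = α + (1 - α + s) by ring, rpow_add hp', show s - α + 1 = 1 - α + s by ring,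
          show -(1 - α + s) = α - 1 - s by ring, rpow_neg hp'.le]
        field_simp
        ring
    _ ≤ _ := sub_le_self _ (by have := log_natCast_nonneg p; positivity)

end HasSpectralGap

theorem stmt16_general (α : ℝ) (hfun : ℝ → ℝ)
    (c' : ℝ) (hc' : 0 < c')
    (hgap : ∀ n₁ n₂ : ℕ, 0 < n₁ → 0 < n₂ →
      c' * |(n₁ : ℝ) - (n₂ : ℝ)| * (n₁ : ℝ) ^ (α - 1) ≤ |hfun n₁ - hfun n₂|)
    (s : ℝ) (hs : s < α - 1) :
    ∃ C'' : ℝ, 0 < C'' ∧ ∀ p : ℕ, 2 ≤ p →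
      (∑' n : ℕ, if n = 0 ∨ n = p then 0 else (n : ℝ) ^ s / |hfun n - hfun p|)
        ≤ C'' * ((p : ℝ) ^ (1 - α + s) * Real.log p + (p : ℝ) ^ (-α)) := by
  obtain ⟨K, hK₀, hK⟩ := exists_sum_Icc_rpow_le s
  set A := (2 + 2 * 2 ^ (α - 1 - s) + 2 / (α - 1 - s)) / c'
  have hA : 0 < A := by
    have : 0 < α - 1 - s := by linarith
    positivity
  refine ⟨A * (1 + (log 2)⁻¹) + 2 * K / c', by positivity, fun p hp => ?_⟩
  refine Real.tsum_le_of_sum_range_le (fun n => by positivity) fun N =>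
    (HasSpectralGap.sum_range_rpow_div_le hgap hc' hs hK (by omega) N).trans ?_
  have hlog := one_add_log_le_mul_log (by exact_mod_cast hp : (2 : ℝ) ≤ p)
  have hL : 0 ≤ log (p : ℝ) := log_natCast_nonneg p
  set P := (p : ℝ) ^ (1 - α + s)
  set E := (p : ℝ) ^ (-α)
  have hP : 0 ≤ P := by positivity
  have hE : 0 ≤ E := by positivity
  calc A * (P * (1 + log p)) + 2 * K / c' * E
      ≤ A * (P * ((1 + (log 2)⁻¹) * log p)) + 2 * K / c' * E := by
        gcongr
    _ ≤ (A * (1 + (log 2)⁻¹) + 2 * K / c') * (P * log p + E) := by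
        have : 0 ≤ A * (1 + (log 2)⁻¹) * E := by positivity
        have : 0 ≤ 2 * K / c' * (P * log p) := by positivity
        nlinarith

/-- General sum estimate for Fourier multipliers h(|D_x|) of order α > 1:
for s < α − 1, ∑_{n ≠ p} n^s/|h(n) − h(p)| ≤ C''·(p^{1−α+s}·log p + p^{−α}). -/
theorem stmt16 (α : ℝ) (hα : 1 < α) (hfun : ℝ → ℝ)
    (c C c' : ℝ) (hc : 0 < c) (hC : 0 < C) (hc' : 0 < c')
    (hgrow : ∀ s : ℝ, 1 ≤ s → c * s ^ α ≤ |hfun s| ∧ |hfun s| ≤ C * s ^ α)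
    (hgap : ∀ n₁ n₂ : ℕ, 0 < n₁ → 0 < n₂ →
      c' * |(n₁ : ℝ) - (n₂ : ℝ)| * (n₁ : ℝ) ^ (α - 1) ≤ |hfun n₁ - hfun n₂|)
    (s : ℝ) (hs : s < α - 1) :
    ∃ C'' : ℝ, 0 < C'' ∧ ∀ p : ℕ, 2 ≤ p →
      (∑' n : ℕ, if n = 0 ∨ n = p then 0 else (n : ℝ) ^ s / |hfun n - hfun p|)
        ≤ C'' * ((p : ℝ) ^ (1 - α + s) * Real.log p + (p : ℝ) ^ (-α)) :=
  stmt16_general α hfun c' hc' hgap s hs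
end
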